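/- Let C be a category of fibrant objects (with weak equivalences W satisfying 2-out-of-3 and fibrations stable under pullback, trivial fibrations stable under pullback, path objects exist). Then every morphism f : X → Y in C factors as f = p ∘ i where p is a fibration and i is a weak equivalence admitting a retraction which is a trivial fibration. -/

import Mathlib

open CategoryTheory CategoryTheory.Limits

universe u v

/-!
Pull back the fibration `t ≫ prod.fst : PY ⟶ Y` of a path object `Y ⟶ PY ⟶ Y ⨯ Y` along
`f` to get `E`. Its section `s` is a weak equivalence, so `t ≫ prod.fst` is a trivial
fibration, hence so is its pullback `r : E ⟶ X`; the graph `i = (𝟙, f ≫ s) : X ⟶ E` is a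
section of `r`, so a weak equivalence by 2-out-of-3. The map `E ⟶ X ⨯ Y` is the pullback of
`t` along `f × 𝟙`, hence a fibration, and `p` is its composite with the fibration `prod.snd`.
-/

namespace CategoryTheory.MorphismProperty

variable {C : Type u} [Category.{v} C] {P : MorphismProperty C}

theorem isStableUnderBaseChange_of_pullback_fst
    (hIso : ∀ {A B : C} (f : A ⟶ B), IsIso f → P f)
    (hComp : ∀ {A B D : C} (f : A ⟶ B) (g : B ⟶ D), P f → P g → P (f ≫ g))
    (hBaseChange : ∀ {A B D : C} (f : A ⟶ D) (g : B ⟶ D), P g →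
      ∀ [HasPullback f g], P (pullback.fst f g)) :
    P.IsStableUnderBaseChange :=
  have : P.RespectsIso := .mk P (fun _ _ hf ↦ hComp _ _ (hIso _ inferInstance) hf)
    (fun _ _ hf ↦ hComp _ _ hf (hIso _ inferInstance))
  .mk' fun _ _ _ f g _ hg ↦ hBaseChange f g hg

variable [P.IsStableUnderBaseChange] [HasTerminal C]

theorem prod_fst_of_terminal_from (hP : ∀ X : C, P (terminal.from X)) (A B : C)
    [HasBinaryProduct A B] :
    P (prod.fst : A ⨯ B ⟶ A) :=
  P.of_isPullback (IsPullback.of_hasBinaryProduct' A B).flip (hP B)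

theorem prod_snd_of_terminal_from (hP : ∀ X : C, P (terminal.from X)) (A B : C)
    [HasBinaryProduct A B] :
    P (prod.snd : A ⨯ B ⟶ B) :=
  P.of_isPullback (IsPullback.of_hasBinaryProduct' A B) (hP A)

end CategoryTheory.MorphismProperty

theorem CategoryTheory.Limits.isPullback_prodLift_pullbackSnd {C : Type u} [Category.{v} C]
    [HasBinaryProducts C] {X Y PY : C} (f : X ⟶ Y) (t : PY ⟶ Y ⨯ Y)
    [HasPullback f (t ≫ prod.fst)] :
    IsPullback (prod.lift (pullback.fst f (t ≫ prod.fst)) (pullback.snd f _ ≫ t ≫ prod.snd))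
      (pullback.snd f _) (prod.map f (𝟙 Y)) t := by
  have hOuter := IsPullback.of_hasPullback f (t ≫ prod.fst)
  rw [← prod.lift_fst (pullback.fst f _) (pullback.snd f _ ≫ t ≫ prod.snd)] at hOuter
  refine hOuter.of_right ?_ (IsPullback.of_prod_fst_with_id f Y)
  ext
  · simp [prod.lift_fst, pullback.condition]
  · simp [prod.lift_snd]

theorem brown_factorization_general
    (C : Type u) [Category.{v} C] [HasTerminal C] [HasBinaryProducts C]
    (W Fib : MorphismProperty C)
    (hWiso : ∀ {A B : C} (f : A ⟶ B), IsIso f → W f)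
    (hW2of3b : ∀ {A B D : C} (f : A ⟶ B) (g : B ⟶ D), W f → W (f ≫ g) → W g)
    (hW2of3c : ∀ {A B D : C} (f : A ⟶ B) (g : B ⟶ D), W g → W (f ≫ g) → W f)
    (hFibIso : ∀ {A B : C} (f : A ⟶ B), IsIso f → Fib f)
    (hFibComp : ∀ {A B D : C} (f : A ⟶ B) (g : B ⟶ D), Fib f → Fib g → Fib (f ≫ g))
    (hFibAll : ∀ X : C, Fib (terminal.from X))
    (hpbex : ∀ {A B D : C} (f : A ⟶ D) (g : B ⟶ D), Fib g → HasPullback f g)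
    (hFibpb : ∀ {A B D : C} (f : A ⟶ D) (g : B ⟶ D), Fib g →
      ∀ [HasPullback f g], Fib (pullback.fst f g))
    (hTrivFibpb : ∀ {A B D : C} (f : A ⟶ D) (g : B ⟶ D), Fib g → W g →
      ∀ [HasPullback f g], Fib (pullback.fst f g) ∧ W (pullback.fst f g))
    (hpath : ∀ X : C, ∃ (PX : C) (s : X ⟶ PX) (t : PX ⟶ X ⨯ X),
      s ≫ t = prod.lift (𝟙 X) (𝟙 X) ∧ W s ∧ Fib t) :
    ∀ {X Y : C} (f : X ⟶ Y), ∃ (E : C) (i : X ⟶ E) (p : E ⟶ Y) (r : E ⟶ X),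
      i ≫ p = f ∧ W i ∧ Fib p ∧ i ≫ r = 𝟙 X ∧ Fib r ∧ W r := by
  intro X Y f
  have := MorphismProperty.isStableUnderBaseChange_of_pullback_fst hFibIso hFibComp hFibpb
  obtain ⟨PY, s, t, hst, hWs, hFibt⟩ := hpath Y
  have hs₁ : s ≫ t ≫ prod.fst = 𝟙 Y := by simp [reassoc_of% hst, prod.lift_fst]
  have hs₂ : s ≫ t ≫ prod.snd = 𝟙 Y := by simp [reassoc_of% hst, prod.lift_snd]
  have hFib₁ : Fib (t ≫ prod.fst) :=
    hFibComp _ _ hFibt (Fib.prod_fst_of_terminal_from hFibAll Y Y)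
  have hW₁ : W (t ≫ prod.fst) := hW2of3b s _ hWs (hs₁ ▸ hWiso _ inferInstance)
  have := hpbex f _ hFib₁
  obtain ⟨hFibr, hWr⟩ := hTrivFibpb f _ hFib₁ hW₁
  let i : X ⟶ pullback f (t ≫ prod.fst) := pullback.lift (𝟙 X) (f ≫ s) (by simp [hs₁])
  have hir : i ≫ pullback.fst _ _ = 𝟙 X := pullback.lift_fst _ _ _
  have hFibp : Fib (pullback.snd f (t ≫ prod.fst) ≫ t ≫ prod.snd) := by
    rw [← prod.lift_snd (pullback.fst f _) (pullback.snd f _ ≫ t ≫ prod.snd)]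
    exact hFibComp _ _
      (Fib.of_isPullback (isPullback_prodLift_pullbackSnd f t).flip hFibt)
      (Fib.prod_snd_of_terminal_from hFibAll X Y)
  have hip : i ≫ pullback.snd f _ ≫ t ≫ prod.snd = f := by
    rw [pullback.lift_snd_assoc, Category.assoc, hs₂, Category.comp_id]
  have hWi : W i := hW2of3c _ _ hWr (hir ▸ hWiso _ inferInstance)
  exact ⟨_, i, _, _, hip, hWi, hFibp, hir, hFibr, hWr⟩

/-- Brown's factorization lemma.  In a category of fibrant objects
(weak equivalences `W` satisfying 2-out-of-3 and containing isomorphisms, fibrations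
`Fib` containing isomorphisms and closed under composition, pullbacks of fibrations
exist and (trivial) fibrations are stable under pullback, and every object has a path
object), every morphism `f : X → Y` factors as a weak equivalence `i` followed by a
fibration `p`, where moreover `i` admits a retraction which is a trivial fibration. -/
theorem brown_factorization
    (C : Type u) [Category.{v} C] [HasTerminal C] [HasBinaryProducts C]
    (W Fib : MorphismProperty C)
    (hWiso : ∀ {A B : C} (f : A ⟶ B), IsIso f → W f)
    (hW2of3a : ∀ {A B D : C} (f : A ⟶ B) (g : B ⟶ D), W f → W g → W (f ≫ g))
    (hW2of3b : ∀ {A B D : C} (f : A ⟶ B) (g : B ⟶ D), W f → W (f ≫ g) → W g)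
    (hW2of3c : ∀ {A B D : C} (f : A ⟶ B) (g : B ⟶ D), W g → W (f ≫ g) → W f)
    (hFibIso : ∀ {A B : C} (f : A ⟶ B), IsIso f → Fib f)
    (hFibComp : ∀ {A B D : C} (f : A ⟶ B) (g : B ⟶ D), Fib f → Fib g → Fib (f ≫ g))
    (hFibAll : ∀ X : C, Fib (terminal.from X))
    (hpbex : ∀ {A B D : C} (f : A ⟶ D) (g : B ⟶ D), Fib g → HasPullback f g)
    (hFibpb : ∀ {A B D : C} (f : A ⟶ D) (g : B ⟶ D), Fib g →
      ∀ [HasPullback f g], Fib (pullback.fst f g))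
    (hTrivFibpb : ∀ {A B D : C} (f : A ⟶ D) (g : B ⟶ D), Fib g → W g →
      ∀ [HasPullback f g], Fib (pullback.fst f g) ∧ W (pullback.fst f g))
    (hpath : ∀ X : C, ∃ (PX : C) (s : X ⟶ PX) (t : PX ⟶ X ⨯ X),
      s ≫ t = prod.lift (𝟙 X) (𝟙 X) ∧ W s ∧ Fib t) :
    ∀ {X Y : C} (f : X ⟶ Y), ∃ (E : C) (i : X ⟶ E) (p : E ⟶ Y) (r : E ⟶ X),
      i ≫ p = f ∧ W i ∧ Fib p ∧ i ≫ r = 𝟙 X ∧ Fib r ∧ W r :=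
  brown_factorization_general C W Fib hWiso hW2of3b hW2of3c hFibIso hFibComp hFibAll hpbex hFibpb
    hTrivFibpb hpath
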